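/- Let π(u) = {p ∈ Π_Γ : P_Γ(u) = pᵀu + h_Γ(p)}. Then for every u ∈ ℝⁿ and every p ∈ π(u): (i) h_Γ(p) = −P*_Γ(p); (ii) p is a subgradient of P_Γ at u, i.e. π(u) ⊆ ∂P_Γ(u). In particular, if P_Γ is differentiable at u, then π(u) = {∇P_Γ(u)}, and hence all gradient vectors of P_Γ lie in Π_Γ. -/

import Mathlib

open Filter Topology Matrix
open scoped Classical

namespace Soft

/-! Basic notions for nearest-neighbour subshifts of finite type (NNSOFT) on `ℤ^d`:
boxes, allowed colorings, color counts, the grand partition function `Z_Γ(m,u)`. -/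

/-- The set of sites of the box `⟨m⟩ = [m₁] × ⋯ × [m_d]` (zero-indexed). -/
def box {d : ℕ} (m : Fin d → ℕ) : Set (Fin d → ℕ) := {x | ∀ i, x i < m i}

/-- The site `x + e_k`. -/
def step {d : ℕ} (x : Fin d → ℕ) (k : Fin d) : Fin d → ℕ :=
  Function.update x k (x k + 1)

/-- `vol(m) = m₁ ⋯ m_d`. -/
def vol {d : ℕ} (m : Fin d → ℕ) : ℕ := ∏ i, m i

/-- `φ` satisfies all nearest-neighbour constraints imposed by `Γ` inside the box `⟨m⟩`:
whenever `x` and `x + e_k` both lie in the box, `(φ x, φ (x + e_k)) ∈ Γ k`. -/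
def Allowed {d n : ℕ} (Γ : Fin d → Set (Fin n × Fin n)) (m : Fin d → ℕ)
    (φ : (Fin d → ℕ) → Fin n) : Prop :=
  ∀ x ∈ box m, ∀ k : Fin d, step x k ∈ box m → (φ x, φ (step x k)) ∈ Γ k

/-- `φ` takes the default color `0` outside the box `⟨m⟩`; colorings of `⟨m⟩` are represented
by functions on all of `ℕ^d` normalized in this way (so that there are finitely many). -/
def Normalized {d n : ℕ} [NeZero n] (m : Fin d → ℕ) (φ : (Fin d → ℕ) → Fin n) : Prop :=
  ∀ x, x ∉ box m → φ x = 0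

/-- `C_Γ(⟨m⟩)`: the set of `Γ`-allowed colorings of the box `⟨m⟩`. -/
def Col {d n : ℕ} [NeZero n] (Γ : Fin d → Set (Fin n × Fin n)) (m : Fin d → ℕ) :
    Set ((Fin d → ℕ) → Fin n) :=
  {φ | Allowed Γ m φ ∧ Normalized m φ}

/-- `Γ`-allowed colorings of the whole lattice `ℤ^d`. -/
def AllowedZ {d n : ℕ} (Γ : Fin d → Set (Fin n × Fin n)) (φ : (Fin d → ℤ) → Fin n) : Prop :=
  ∀ (x : Fin d → ℤ) (k : Fin d), (φ x, φ (Function.update x k (x k + 1))) ∈ Γ k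

/-- `c(φ)_j`: the number of sites of `⟨m⟩` colored `j` by `φ`. -/
noncomputable def cnt {d n : ℕ} (m : Fin d → ℕ) (φ : (Fin d → ℕ) → Fin n) (j : Fin n) : ℕ :=
  Nat.card {x : Fin d → ℕ // x ∈ box m ∧ φ x = j}

/-- The weight `exp (c(φ)ᵀ u)` of a coloring `φ` of `⟨m⟩`. -/
noncomputable def weight {d n : ℕ} (m : Fin d → ℕ) (φ : (Fin d → ℕ) → Fin n)
    (u : Fin n → ℝ) : ℝ :=
  Real.exp (∑ j, (cnt m φ j : ℝ) * u j)

/-- The grand partition function `Z_Γ(m,u) = Σ_{φ ∈ C_Γ(⟨m⟩)} exp (c(φ)ᵀ u)`. -/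
noncomputable def Z {d n : ℕ} [NeZero n] (Γ : Fin d → Set (Fin n × Fin n)) (m : Fin d → ℕ)
    (u : Fin n → ℝ) : ℝ :=
  ∑' φ : Col Γ m, weight m φ.1 u

/-! Density points and the density entropy. -/

/-- `p ∈ Π_Γ`: `p` is a probability vector arising as a limiting color-frequency vector of
allowed colorings of a sequence of boxes all whose sides tend to infinity. -/
def IsDensityPoint {d n : ℕ} [NeZero n] (Γ : Fin d → Set (Fin n × Fin n))
    (p : Fin n → ℝ) : Prop :=
  (∀ i, 0 ≤ p i) ∧ (∑ i, p i) = 1 ∧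
  ∃ (mq : ℕ → Fin d → ℕ) (cq : ℕ → Fin n → ℕ),
    Tendsto mq atTop atTop ∧
    (∀ q, (∑ i, cq q i) = vol (mq q)) ∧
    (∀ q, ∃ φ ∈ Col Γ (mq q), ∀ j, cnt (mq q) φ j = cq q j) ∧
    Tendsto (fun q => fun i => (cq q i : ℝ) / (vol (mq q) : ℝ)) atTop (𝓝 p)

/-- `#C_Γ(⟨m⟩, c)`: the number of `Γ`-allowed colorings of `⟨m⟩` with color-frequency
vector `c`. -/
noncomputable def NCol {d n : ℕ} [NeZero n] (Γ : Fin d → Set (Fin n × Fin n))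
    (m : Fin d → ℕ) (c : Fin n → ℕ) : ℕ :=
  Nat.card {φ : (Fin d → ℕ) → Fin n // φ ∈ Col Γ m ∧ ∀ j, cnt m φ j = c j}

/-- The density entropy `h_Γ(p)`: the supremum, over all sequences of boxes and
color-frequency vectors converging in frequency to `p`, of the exponential growth rate
`limsup_q log #C_Γ(⟨m_q⟩,c_q) / vol(m_q)`. -/
noncomputable def densityEntropy {d n : ℕ} [NeZero n] (Γ : Fin d → Set (Fin n × Fin n))
    (p : Fin n → ℝ) : ℝ :=
  sSup {h | ∃ (mq : ℕ → Fin d → ℕ) (cq : ℕ → Fin n → ℕ),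
    Tendsto mq atTop atTop ∧
    (∀ q, (∑ i, cq q i) = vol (mq q)) ∧
    (∀ q, ∃ φ ∈ Col Γ (mq q), ∀ j, cnt (mq q) φ j = cq q j) ∧
    Tendsto (fun q => fun i => (cq q i : ℝ) / (vol (mq q) : ℝ)) atTop (𝓝 p) ∧
    h = Filter.limsup
      (fun q => Real.log (NCol Γ (mq q) (cq q)) / (vol (mq q) : ℝ)) atTop}

/-- `y` is a subgradient of `f` at `u`. -/
def Subgrad {N : ℕ} (f : (Fin N → ℝ) → ℝ) (u y : Fin N → ℝ) : Prop :=
  ∀ z, f u + ∑ i, y i * (z i - u i) ≤ f z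

/-- The conjugate convex function `f*(p) = sup_u (pᵀu − f(u))`, with values in `EReal`. -/
noncomputable def conj {N : ℕ} (f : (Fin N → ℝ) → ℝ) (p : Fin N → ℝ) : EReal :=
  ⨆ u : Fin N → ℝ, (((∑ i, p i * u i) - f u : ℝ) : EReal)

/-- `π(u) = {p ∈ Π_Γ : P_Γ(u) = pᵀu + h_Γ(p)}`. -/
def piSet {d n : ℕ} [NeZero n] (Γ : Fin d → Set (Fin n × Fin n))
    (P : (Fin n → ℝ) → ℝ) (u : Fin n → ℝ) : Set (Fin n → ℝ) :=
  {p | IsDensityPoint Γ p ∧ P u = (∑ i, p i * u i) + densityEntropy Γ p}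

/-- The gradient vector associated with a continuous linear functional on `ℝⁿ`. -/
noncomputable def gradOf {N : ℕ} (L : (Fin N → ℝ) →L[ℝ] ℝ) : Fin N → ℝ :=
  fun i => L (Pi.single i 1)

/-! Grouping the colorings of `⟨m⟩` by their count vector `c` writes `Z_Γ(m,z)` as a sum of
at most `(vol m + 1)ⁿ` terms `#C_Γ(⟨m⟩,c) · exp (cᵀz)`. Each term is at most the sum, which gives
`h_Γ(p) ≤ P_Γ(z) − pᵀz` for all `z`; for `p ∈ π(u)` this is an equality at `z = u`, i.e. (i)
and (ii). Conversely the largest term is at least `Z_Γ(m,u) / (vol m + 1)ⁿ`, and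
the polynomial factor is invisible at exponential scale; so a limit point `p` of the frequency
vectors of the largest terms along growing cubes has `P_Γ(u) ≤ pᵀu + h_Γ(p)`, and `π(u)` is
nonempty. When `P_Γ` is differentiable at `u` its only subgradient there is the gradient. -/

theorem Subgrad.eq_gradOf {N : ℕ} {f : (Fin N → ℝ) → ℝ} {L : (Fin N → ℝ) →L[ℝ] ℝ}
    {u y : Fin N → ℝ} (hy : Subgrad f u y) (hf : HasFDerivAt f L u) : y = gradOf L := by
  let ℓ : (Fin N → ℝ) →L[ℝ] ℝ := ∑ i, y i • ContinuousLinearMap.proj i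
  have hℓ : ∀ z, ℓ z = ∑ i, y i * z i := fun z => by simp [ℓ]
  have hmin : IsLocalMin (fun z => f z - ℓ z) u := Eventually.of_forall fun z => by
    have hz := hy z
    simp only [hℓ, mul_sub, Finset.sum_sub_distrib] at hz ⊢
    linarith
  have hL : L = ℓ := sub_eq_zero.1 (hmin.hasFDerivAt_eq_zero (hf.sub ℓ.hasFDerivAt))
  funext i
  simp [gradOf, hL, hℓ, Pi.single_apply]

theorem conj_eq_of_forall_le {N : ℕ} {f : (Fin N → ℝ) → ℝ} {p u : Fin N → ℝ} {a : ℝ}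
    (hle : ∀ z, (∑ i, p i * z i) - f z ≤ a) (hu : (∑ i, p i * u i) - f u = a) :
    conj f p = a :=
  le_antisymm (iSup_le fun z => EReal.coe_le_coe (hle z)) (hu ▸ le_iSup_of_le u le_rfl)

theorem tendsto_log_add_one_div_atTop :
    Tendsto (fun x : ℝ => Real.log (x + 1) / x) atTop (𝓝 0) := by
  have := (Real.tendsto_pow_log_div_mul_add_atTop 1 (-1) 1 one_ne_zero).comp
    (tendsto_atTop_add_const_right atTop 1 tendsto_id)
  simpa [Function.comp_def] using this

section Boxes

variable {d n : ℕ}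

theorem pow_le_vol {m : Fin d → ℕ} {k : ℕ} (h : ∀ i, k ≤ m i) : k ^ d ≤ vol m := by
  simpa [vol] using Finset.pow_card_le_prod Finset.univ m k fun i _ => h i

theorem eventually_vol_pos {mq : ℕ → Fin d → ℕ} (hm : Tendsto mq atTop atTop) :
    ∀ᶠ q in atTop, 0 < vol (mq q) :=
  (hm.eventually_ge_atTop 1).mono fun _ hq => (pow_pos one_pos d).trans_le (pow_le_vol hq)

theorem tendsto_vol_atTop (hd : 0 < d) {mq : ℕ → Fin d → ℕ} (hm : Tendsto mq atTop atTop) :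
    Tendsto (fun q => vol (mq q)) atTop atTop :=
  tendsto_atTop.2 fun k => (hm.eventually_ge_atTop fun _ => k).mono fun _ hq =>
    (Nat.le_self_pow hd.ne' k).trans (pow_le_vol hq)

theorem tendsto_cube_atTop :
    Tendsto (fun q (_ : Fin d) => q + 1) atTop (atTop : Filter (Fin d → ℕ)) :=
  tendsto_atTop_atTop_of_monotone (fun _ _ h _ => Nat.succ_le_succ h)
    fun b => ⟨Finset.univ.sup b, fun i => (Finset.le_sup (Finset.mem_univ i)).trans le_self_add⟩

def boxFinset (m : Fin d → ℕ) : Finset (Fin d → ℕ) :=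
  Fintype.piFinset fun i => Finset.range (m i)

theorem mem_boxFinset {m x : Fin d → ℕ} : x ∈ boxFinset m ↔ x ∈ box m := by
  simp [boxFinset, box]

theorem card_boxFinset (m : Fin d → ℕ) : (boxFinset m).card = vol m := by
  simp [boxFinset, vol]

theorem cnt_eq_card_filter (m : Fin d → ℕ) (φ : (Fin d → ℕ) → Fin n) (j : Fin n) :
    cnt m φ j = ((boxFinset m).filter fun x => φ x = j).card := by
  rw [cnt, ← Nat.card_eq_finsetCard]
  simp [mem_boxFinset]

theorem sum_cnt (m : Fin d → ℕ) (φ : (Fin d → ℕ) → Fin n) : ∑ j, cnt m φ j = vol m := by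
  simp only [cnt_eq_card_filter]
  rw [← Finset.card_eq_sum_card_fiberwise fun x _ => Finset.mem_univ (φ x), card_boxFinset]

theorem cnt_le_vol (m : Fin d → ℕ) (φ : (Fin d → ℕ) → Fin n) (j : Fin n) : cnt m φ j ≤ vol m :=
  cnt_eq_card_filter m φ j ▸ card_boxFinset m ▸ Finset.card_filter_le _ _

end Boxes

section Colorings

variable {d n : ℕ} [NeZero n] {Γ : Fin d → Set (Fin n × Fin n)} {m : Fin d → ℕ}

def IsColorCount (Γ : Fin d → Set (Fin n × Fin n)) (m : Fin d → ℕ) (c : Fin n → ℕ) : Prop :=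
  ∃ φ ∈ Col Γ m, ∀ j, cnt m φ j = c j

theorem IsColorCount.sum_eq_vol {c : Fin n → ℕ} (hc : IsColorCount Γ m c) :
    ∑ j, c j = vol m := by
  obtain ⟨φ, -, hφ⟩ := hc
  simp only [← hφ, sum_cnt]

theorem IsColorCount.freq_mem_stdSimplex {c : Fin n → ℕ} (hc : IsColorCount Γ m c)
    (hm : 0 < vol m) : (fun j => (c j : ℝ) / vol m) ∈ stdSimplex ℝ (Fin n) := by
  refine ⟨fun j => by positivity, ?_⟩
  rw [← Finset.sum_div, div_eq_one_iff_eq (by positivity)]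
  exact_mod_cast hc.sum_eq_vol

theorem col_nonempty (hne : ∃ φ : (Fin d → ℤ) → Fin n, AllowedZ Γ φ) (m : Fin d → ℕ) :
    (Col Γ m).Nonempty := by
  obtain ⟨ψ, hψ⟩ := hne
  refine ⟨fun x => if x ∈ box m then ψ (fun i => x i) else 0, fun x hx k hxk => ?_,
    fun x hx => if_neg hx⟩
  have hstep : (fun i => ((step x k i : ℕ) : ℤ))
      = Function.update (fun i => (x i : ℤ)) k (x k + 1) := by
    funext i
    rcases eq_or_ne i k with rfl | hik
    · simp [step]
    · simp [step, hik]
  simpa only [if_pos hx, if_pos hxk, hstep] using hψ (fun i => x i) k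

theorem col_finite (Γ : Fin d → Set (Fin n × Fin n)) (m : Fin d → ℕ) : (Col Γ m).Finite := by
  refine Set.Finite.of_finite_image (f := fun φ (x : boxFinset m) => φ x) (Set.toFinite _) ?_
  intro φ hφ ψ hψ h
  funext x
  by_cases hx : x ∈ box m
  · exact congrFun h ⟨x, mem_boxFinset.2 hx⟩
  · rw [hφ.2 x hx, hψ.2 x hx]

noncomputable def colFinset (Γ : Fin d → Set (Fin n × Fin n)) (m : Fin d → ℕ) :
    Finset ((Fin d → ℕ) → Fin n) :=
  (col_finite Γ m).toFinset

theorem Z_eq_sum_colFinset (u : Fin n → ℝ) : Z Γ m u = ∑ φ ∈ colFinset Γ m, weight m φ u := by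
  have hcol : Col Γ m = ↑(colFinset Γ m) := (Set.Finite.coe_toFinset _).symm
  rw [Z, hcol, Finset.tsum_subtype' (colFinset Γ m) fun φ => weight m φ u]

theorem NCol_eq_card_filter (c : Fin n → ℕ) :
    NCol Γ m c = ((colFinset Γ m).filter fun φ => cnt m φ = c).card := by
  rw [NCol, ← Nat.card_eq_finsetCard]
  simp [colFinset, funext_iff]

theorem NCol_ne_zero_iff {c : Fin n → ℕ} : NCol Γ m c ≠ 0 ↔ IsColorCount Γ m c := by
  simp [NCol_eq_card_filter, colFinset, IsColorCount, funext_iff]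

theorem sum_weight_filter_cnt_eq (c : Fin n → ℕ) (u : Fin n → ℝ) :
    ∑ φ ∈ (colFinset Γ m).filter (fun φ => cnt m φ = c), weight m φ u
      = NCol Γ m c * Real.exp (∑ j, (c j : ℝ) * u j) := by
  rw [Finset.sum_congr rfl fun φ hφ => by rw [weight, (Finset.mem_filter.1 hφ).2],
    Finset.sum_const, nsmul_eq_mul, NCol_eq_card_filter]

theorem NCol_mul_exp_le_Z (c : Fin n → ℕ) (u : Fin n → ℝ) :
    NCol Γ m c * Real.exp (∑ j, (c j : ℝ) * u j) ≤ Z Γ m u := by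
  rw [← sum_weight_filter_cnt_eq, Z_eq_sum_colFinset]
  exact Finset.sum_le_sum_of_subset_of_nonneg (Finset.filter_subset _ _)
    fun φ _ _ => (Real.exp_pos _).le

theorem IsColorCount.Z_pos {c : Fin n → ℕ} (hc : IsColorCount Γ m c) (u : Fin n → ℝ) :
    0 < Z Γ m u := by
  have hN : (0 : ℝ) < NCol Γ m c := by exact_mod_cast Nat.pos_of_ne_zero (NCol_ne_zero_iff.2 hc)
  exact (mul_pos hN (Real.exp_pos _)).trans_le (NCol_mul_exp_le_Z c u)

def countBox (m : Fin d → ℕ) : Finset (Fin n → ℕ) :=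
  Fintype.piFinset fun _ => Finset.range (vol m + 1)

theorem Z_eq_sum_countBox (u : Fin n → ℝ) :
    Z Γ m u = ∑ c ∈ countBox m, NCol Γ m c * Real.exp (∑ j, (c j : ℝ) * u j) := by
  have hmaps : ∀ φ ∈ colFinset Γ m, cnt m φ ∈ countBox m := fun φ _ => by
    simpa [countBox, Nat.lt_succ_iff] using cnt_le_vol m φ
  simp only [← sum_weight_filter_cnt_eq]
  rw [Finset.sum_fiberwise_of_maps_to hmaps, Z_eq_sum_colFinset]

theorem exists_isColorCount_Z_le (hne : (Col Γ m).Nonempty) (u : Fin n → ℝ) :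
    ∃ c, IsColorCount Γ m c ∧
      Z Γ m u ≤ ((vol m : ℝ) + 1) ^ n * (NCol Γ m c * Real.exp (∑ j, (c j : ℝ) * u j)) := by
  obtain ⟨φ, hφ⟩ := hne
  have hZ : 0 < Z Γ m u := IsColorCount.Z_pos ⟨φ, hφ, fun _ => rfl⟩ u
  obtain ⟨c, -, hmax⟩ := (countBox m).exists_max_image
    (fun c => NCol Γ m c * Real.exp (∑ j, (c j : ℝ) * u j)) ⟨0, by simp [countBox]⟩
  have hle :
      Z Γ m u ≤ ((vol m : ℝ) + 1) ^ n * (NCol Γ m c * Real.exp (∑ j, (c j : ℝ) * u j)) := by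
    rw [Z_eq_sum_countBox]
    refine (Finset.sum_le_card_nsmul _ _ _ hmax).trans_eq ?_
    simp [countBox, nsmul_eq_mul]
  refine ⟨c, NCol_ne_zero_iff.1 fun h0 => ?_, hle⟩
  rw [h0, Nat.cast_zero, zero_mul, mul_zero] at hle
  exact hZ.not_ge hle

theorem log_NCol_div_vol_le {c : Fin n → ℕ} (hc : IsColorCount Γ m c) (hm : 0 < vol m)
    (z : Fin n → ℝ) :
    Real.log (NCol Γ m c) / vol m
      ≤ Real.log (Z Γ m z) / vol m - ∑ j, (c j : ℝ) / vol m * z j := by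
  have hN : (0 : ℝ) < NCol Γ m c := by exact_mod_cast Nat.pos_of_ne_zero (NCol_ne_zero_iff.2 hc)
  have hlog := Real.log_le_log (by positivity) (NCol_mul_exp_le_Z (Γ := Γ) (m := m) c z)
  rw [Real.log_mul hN.ne' (Real.exp_pos _).ne', Real.log_exp] at hlog
  simp_rw [div_mul_eq_mul_div, ← Finset.sum_div, ← sub_div]
  gcongr
  linarith

theorem log_Z_div_vol_le {c : Fin n → ℕ} (hc : IsColorCount Γ m c) (hm : 0 < vol m)
    {u : Fin n → ℝ}
    (hZ : Z Γ m u ≤ ((vol m : ℝ) + 1) ^ n * (NCol Γ m c * Real.exp (∑ j, (c j : ℝ) * u j))) :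
    Real.log (Z Γ m u) / vol m - n * (Real.log ((vol m : ℝ) + 1) / vol m)
      - ∑ j, (c j : ℝ) / vol m * u j ≤ Real.log (NCol Γ m c) / vol m := by
  have hN : (0 : ℝ) < NCol Γ m c := by exact_mod_cast Nat.pos_of_ne_zero (NCol_ne_zero_iff.2 hc)
  have hlog := Real.log_le_log (hc.Z_pos u) hZ
  rw [Real.log_mul (by positivity) (by positivity), Real.log_mul hN.ne' (Real.exp_pos _).ne',
    Real.log_exp, Real.log_pow] at hlog
  simp_rw [div_mul_eq_mul_div, ← Finset.sum_div, mul_div_assoc', ← sub_div]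
  gcongr
  linarith

end Colorings

section Limits

variable {d n : ℕ} [NeZero n] {Γ : Fin d → Set (Fin n × Fin n)} {P : (Fin n → ℝ) → ℝ}
  {mq : ℕ → Fin d → ℕ} {cq : ℕ → Fin n → ℕ} {p : Fin n → ℝ}

theorem tendsto_log_Z_div_vol_sub
    (hP : ∀ u, Tendsto (fun m : Fin d → ℕ => Real.log (Z Γ m u) / vol m) atTop (𝓝 (P u)))
    (hm : Tendsto mq atTop atTop)
    (hfreq : Tendsto (fun q j => (cq q j : ℝ) / vol (mq q)) atTop (𝓝 p)) (z : Fin n → ℝ) :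
    Tendsto (fun q => Real.log (Z Γ (mq q) z) / vol (mq q) - ∑ j, (cq q j : ℝ) / vol (mq q) * z j)
      atTop (𝓝 (P z - ∑ j, p j * z j)) :=
  ((hP z).comp hm).sub <| tendsto_finsetSum _ fun j _ =>
    (tendsto_pi_nhds.1 hfreq j).mul_const (z j)

theorem limsup_log_NCol_div_vol_le
    (hP : ∀ u, Tendsto (fun m : Fin d → ℕ => Real.log (Z Γ m u) / vol m) atTop (𝓝 (P u)))
    (hm : Tendsto mq atTop atTop) (hc : ∀ q, IsColorCount Γ (mq q) (cq q))
    (hfreq : Tendsto (fun q j => (cq q j : ℝ) / vol (mq q)) atTop (𝓝 p)) (z : Fin n → ℝ) :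
    limsup (fun q => Real.log (NCol Γ (mq q) (cq q)) / vol (mq q)) atTop
      ≤ P z - ∑ j, p j * z j := by
  have hupper := tendsto_log_Z_div_vol_sub hP hm hfreq z
  rw [← hupper.limsup_eq]
  exact limsup_le_limsup
    ((eventually_vol_pos hm).mono fun q hq => log_NCol_div_vol_le (hc q) hq z)
    (isCoboundedUnder_le_of_le atTop fun _ =>
      div_nonneg (Real.log_natCast_nonneg _) (Nat.cast_nonneg _))
    hupper.isBoundedUnder_le

theorem le_limsup_log_NCol_div_vol
    (hP : ∀ u, Tendsto (fun m : Fin d → ℕ => Real.log (Z Γ m u) / vol m) atTop (𝓝 (P u)))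
    (hd : 0 < d) (hm : Tendsto mq atTop atTop) (hc : ∀ q, IsColorCount Γ (mq q) (cq q))
    (hfreq : Tendsto (fun q j => (cq q j : ℝ) / vol (mq q)) atTop (𝓝 p)) {u : Fin n → ℝ}
    (hZ : ∀ q, Z Γ (mq q) u ≤ ((vol (mq q) : ℝ) + 1) ^ n *
      (NCol Γ (mq q) (cq q) * Real.exp (∑ j, (cq q j : ℝ) * u j))) :
    P u - ∑ j, p j * u j
      ≤ limsup (fun q => Real.log (NCol Γ (mq q) (cq q)) / vol (mq q)) atTop := by
  have hvol := (tendsto_natCast_atTop_atTop (R := ℝ)).comp (tendsto_vol_atTop hd hm)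
  have hpoly : Tendsto (fun q => (n : ℝ) * (Real.log ((vol (mq q) : ℝ) + 1) / vol (mq q)))
      atTop (𝓝 0) := by
    simpa using (tendsto_log_add_one_div_atTop.comp hvol).const_mul (n : ℝ)
  have hlower : Tendsto (fun q => Real.log (Z Γ (mq q) u) / vol (mq q)
      - n * (Real.log ((vol (mq q) : ℝ) + 1) / vol (mq q)) - ∑ j, (cq q j : ℝ) / vol (mq q) * u j)
      atTop (𝓝 (P u - ∑ j, p j * u j)) := by
    simpa [sub_right_comm] using (tendsto_log_Z_div_vol_sub hP hm hfreq u).sub hpoly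
  have hbdd : IsBoundedUnder (· ≤ ·) atTop
      fun q => Real.log (NCol Γ (mq q) (cq q)) / vol (mq q) :=
    (tendsto_log_Z_div_vol_sub hP hm hfreq 0).isBoundedUnder_le.mono_le <|
      (eventually_vol_pos hm).mono fun q hq => log_NCol_div_vol_le (hc q) hq 0
  rw [← hlower.limsup_eq]
  exact limsup_le_limsup
    ((eventually_vol_pos hm).mono fun q hq => log_Z_div_vol_le (hc q) hq (hZ q))
    hlower.isCoboundedUnder_le hbdd

end Limits

section Entropy

variable {d n : ℕ} [NeZero n] {Γ : Fin d → Set (Fin n × Fin n)} {P : (Fin n → ℝ) → ℝ}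

theorem densityEntropy_le
    (hP : ∀ u, Tendsto (fun m : Fin d → ℕ => Real.log (Z Γ m u) / vol m) atTop (𝓝 (P u)))
    {p : Fin n → ℝ} (hp : IsDensityPoint Γ p) (z : Fin n → ℝ) :
    densityEntropy Γ p ≤ P z - ∑ j, p j * z j := by
  obtain ⟨-, -, mq, cq, hm, hsum, hc, hfreq⟩ := hp
  refine csSup_le ⟨_, mq, cq, hm, hsum, hc, hfreq, rfl⟩ ?_
  rintro _ ⟨mq, cq, hm, -, hc, hfreq, rfl⟩
  exact limsup_log_NCol_div_vol_le hP hm hc hfreq z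

theorem le_densityEntropy
    (hP : ∀ u, Tendsto (fun m : Fin d → ℕ => Real.log (Z Γ m u) / vol m) atTop (𝓝 (P u)))
    {mq : ℕ → Fin d → ℕ} {cq : ℕ → Fin n → ℕ} {p : Fin n → ℝ}
    (hm : Tendsto mq atTop atTop) (hsum : ∀ q, ∑ j, cq q j = vol (mq q))
    (hc : ∀ q, IsColorCount Γ (mq q) (cq q))
    (hfreq : Tendsto (fun q j => (cq q j : ℝ) / vol (mq q)) atTop (𝓝 p)) :
    limsup (fun q => Real.log (NCol Γ (mq q) (cq q)) / vol (mq q)) atTop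
      ≤ densityEntropy Γ p := by
  refine le_csSup ⟨P 0 - ∑ j, p j * 0, ?_⟩ ⟨mq, cq, hm, hsum, hc, hfreq, rfl⟩
  rintro _ ⟨mq, cq, hm, -, hc, hfreq, rfl⟩
  exact limsup_log_NCol_div_vol_le hP hm hc hfreq 0

theorem exists_mem_piSet (hd : 0 < d) (hne : ∃ φ : (Fin d → ℤ) → Fin n, AllowedZ Γ φ)
    (hP : ∀ u, Tendsto (fun m : Fin d → ℕ => Real.log (Z Γ m u) / vol m) atTop (𝓝 (P u)))
    (u : Fin n → ℝ) : (piSet Γ P u).Nonempty := by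
  choose cq hc hZ using fun q : ℕ =>
    exists_isColorCount_Z_le (col_nonempty hne fun _ => q + 1) u
  have hfreq_mem (q : ℕ) :
      (fun j => (cq q j : ℝ) / vol fun _ : Fin d => q + 1) ∈ stdSimplex ℝ (Fin n) :=
    (hc q).freq_mem_stdSimplex (Finset.prod_pos fun _ _ => q.succ_pos)
  obtain ⟨p, hp, ψ, hψ, hfreq⟩ := (isCompact_stdSimplex ℝ (Fin n)).tendsto_subseq hfreq_mem
  have hm : Tendsto (fun q (_ : Fin d) => ψ q + 1) atTop atTop :=
    tendsto_cube_atTop.comp hψ.tendsto_atTop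
  have hsum (q : ℕ) := (hc (ψ q)).sum_eq_vol
  have hdp : IsDensityPoint Γ p := ⟨hp.1, hp.2, _, _, hm, hsum, fun q => hc (ψ q), hfreq⟩
  have hlower := le_limsup_log_NCol_div_vol hP hd hm (fun q => hc (ψ q)) hfreq fun q => hZ (ψ q)
  have hrate := le_densityEntropy hP hm hsum (fun q => hc (ψ q)) hfreq
  refine ⟨p, hdp, ?_⟩
  linarith [densityEntropy_le hP hdp u]

end Entropy

/-- For every `u ∈ ℝⁿ` and every `p ∈ π(u)`:
(i) `h_Γ(p) = −P*_Γ(p)`; (ii) `p` is a subgradient of `P_Γ` at `u`.  In particular, if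
`P_Γ` is differentiable at `u` (with derivative `L`, gradient `∇P_Γ(u) = gradOf L`),
then `π(u) = {∇P_Γ(u)}` and `∇P_Γ(u)` is a density point. -/
theorem piSet_properties
    (d n : ℕ) (hd : 0 < d) [NeZero n]
    (Γ : Fin d → Set (Fin n × Fin n))
    (hne : ∃ φ : (Fin d → ℤ) → Fin n, AllowedZ Γ φ)
    (P : (Fin n → ℝ) → ℝ)
    (hP : ∀ u, Tendsto (fun m : Fin d → ℕ =>
        Real.log (Z Γ m u) / (vol m : ℝ)) atTop (𝓝 (P u))) :
    (∀ u : Fin n → ℝ, ∀ p ∈ piSet Γ P u,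
      ((densityEntropy Γ p : ℝ) : EReal) = - conj P p ∧ Subgrad P u p) ∧
    (∀ (u : Fin n → ℝ) (L : (Fin n → ℝ) →L[ℝ] ℝ), HasFDerivAt P L u →
      piSet Γ P u = {gradOf L} ∧ IsDensityPoint Γ (gradOf L)) := by
  have hconj_subgrad : ∀ u, ∀ p ∈ piSet Γ P u,
      ((densityEntropy Γ p : ℝ) : EReal) = - conj P p ∧ Subgrad P u p := by
    rintro u p ⟨hp, hPu⟩
    have hle := densityEntropy_le hP hp
    refine ⟨?_, fun z => ?_⟩
    · rw [conj_eq_of_forall_le (a := -densityEntropy Γ p) (fun z => by linarith [hle z])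
        (by linarith), EReal.coe_neg, neg_neg]
    · simp only [mul_sub, Finset.sum_sub_distrib]
      linarith [hle z]
  refine ⟨hconj_subgrad, fun u L hL => ?_⟩
  have hgrad : ∀ p ∈ piSet Γ P u, p = gradOf L :=
    fun p hp => (hconj_subgrad u p hp).2.eq_gradOf hL
  obtain ⟨p, hp⟩ := exists_mem_piSet hd hne hP u
  obtain rfl := hgrad p hp
  exact ⟨Set.eq_singleton_iff_unique_mem.2 ⟨hp, hgrad⟩, hp.1⟩

end Soft
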